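/- Let μ = μ_{R,B} be the self-affine measure for R = [[2,1],[0,2]] and B = {(0,0),(1,0)}, and let Λ ⊆ ℝ² with 0 ∈ Λ. Then Λ is a spectrum of μ if and only if there exists a function β : ℤ → ℝ with β(0) = 0 such that Λ = {(n, β(n)) : n ∈ ℤ}. -/

import Mathlib

open MeasureTheory Filter Set Metric
open scoped ENNReal

noncomputable section

/-- The plane with the Euclidean metric. -/
abbrev Plane : Type := EuclideanSpace ℝ (Fin 2)

/-- The point `(a, b)` of the Euclidean plane. -/
def pt (a b : ℝ) : Plane := WithLp.toLp 2 ![a, b]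

/-- The self-affine measure `μ_{R,B}` for `R = [[2,1],[0,2]]`, `B = {(0,0),(1,0)}`:
the pushforward of Lebesgue measure on `[0,1]` under `x ↦ (x, 0)`. -/
def muRB : Measure Plane :=
  Measure.map (fun x : ℝ => pt x 0) (volume.restrict (Set.Icc (0:ℝ) 1))

instance : IsProbabilityMeasure (volume.restrict (Set.Icc (0:ℝ) 1)) :=
  ⟨by simp [Real.volume_Icc]⟩

lemma measurable_pt0 : Measurable (fun x : ℝ => pt x 0) := by
  unfold pt
  refine (WithLp.measurable_toLp 2 _).comp (measurable_pi_lambda _ (fun i => ?_))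
  fin_cases i
  · simp only [Matrix.cons_val_zero]
    exact measurable_id
  · simp only [Matrix.cons_val_one, Matrix.head_cons]
    exact measurable_const

instance : IsProbabilityMeasure muRB :=
  Measure.isProbabilityMeasure_map measurable_pt0.aemeasurable

/-- The Fourier transform `μ̂(ξ) = ∫ e^{-2πi⟨ξ,x⟩} dμ(x)` of a measure on the plane. -/
def fourierTransform (μ : Measure Plane) (ξ : Plane) : ℂ :=
  ∫ x, Complex.exp ((-(2 * Real.pi * (inner ℝ ξ x : ℝ)) : ℝ) * Complex.I) ∂μ

/-- The exponential function `e_λ(x) = e^{-2πi⟨λ,x⟩}`. -/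
def expFn (lam : Plane) : Plane → ℂ :=
  fun x => Complex.exp ((-(2 * Real.pi * (inner ℝ lam x : ℝ)) : ℝ) * Complex.I)

lemma expFn_memLp (μ : Measure Plane) [IsFiniteMeasure μ] (lam : Plane) :
    MemLp (expFn lam) 2 μ := by
  refine MemLp.of_bound ?_ 1 ?_
  · apply Continuous.aestronglyMeasurable
    unfold expFn
    have h1 : Continuous fun x : Plane => (inner ℝ lam x : ℝ) :=
      continuous_const.inner continuous_id
    exact Complex.continuous_exp.comp
      ((Complex.continuous_ofReal.comp ((continuous_const.mul h1).neg)).mul continuous_const)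
  · refine Eventually.of_forall fun x => ?_
    unfold expFn
    rw [Complex.norm_exp_ofReal_mul_I]

/-- The exponential `e_λ` as an element of `L²(μ)`. -/
def expLp (μ : Measure Plane) [IsFiniteMeasure μ] (lam : Plane) : Lp ℂ 2 μ :=
  (expFn_memLp μ lam).toLp _

/-- `Λ` is an orthogonal set of `μ`: the exponentials `{e_λ : λ ∈ Λ}` form an
orthonormal family in `L²(μ)`. -/
def IsOrthogonalSet (μ : Measure Plane) [IsFiniteMeasure μ] (Λ : Set Plane) : Prop :=
  Orthonormal ℂ (fun lam : Λ => expLp μ lam)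

/-- `Λ` is a spectrum of `μ`: the exponentials `{e_λ : λ ∈ Λ}` form an
orthonormal basis of `L²(μ)`. -/
def IsSpectrum (μ : Measure Plane) [IsFiniteMeasure μ] (Λ : Set Plane) : Prop :=
  Orthonormal ℂ (fun lam : Λ => expLp μ lam) ∧
    (Submodule.span ℂ (Set.range (fun lam : Λ => expLp μ lam))).topologicalClosure = ⊤

/-- The upper `r`-Beurling density
`D_r^+(Λ) = limsup_{h→∞} sup_{x} #(Λ ∩ B(x,h)) / h^r`. -/
def beurlingDensity (r : ℝ) (Λ : Set Plane) : ℝ≥0∞ :=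
  limsup (fun h : ℝ =>
    ⨆ x : Plane, ((Λ ∩ Metric.ball x h).encard : ℝ≥0∞) / ENNReal.ofReal (h ^ r)) atTop

/-- The upper `r`-density (centered at the origin)
`B_r^+(Λ) = limsup_{h→∞} #(Λ ∩ B(0,h)) / h^r`. -/
def upperDensity (r : ℝ) (Λ : Set Plane) : ℝ≥0∞ :=
  limsup (fun h : ℝ =>
    ((Λ ∩ Metric.ball (0 : Plane) h).encard : ℝ≥0∞) / ENNReal.ofReal (h ^ r)) atTop

/-- The Beurling dimension `dim_Be(Λ) = sup {r > 0 : D_r^+(Λ) = ∞}`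
(equal to `0` when the set is empty, by the convention `sSup ∅ = 0` in `ℝ`). -/
def beurlingDim (Λ : Set Plane) : ℝ :=
  sSup {r : ℝ | 0 < r ∧ beurlingDensity r Λ = ⊤}

/-- The Banach dimension `dim_Ba(Λ) = sup {r > 0 : B_r^+(Λ) = ∞}`. -/
def banachDim (Λ : Set Plane) : ℝ :=
  sSup {r : ℝ | 0 < r ∧ upperDensity r Λ = ⊤}

/-- The sign of an integer, as a real number. -/
def isgn (n : ℤ) : ℝ := (Int.sign n : ℝ)

end

/-!
The measure `μ` is Lebesgue measure on the segment `[0,1] × {0}`, so `μ̂(ξ) = ∫₀¹ e^{-2πi ξ₀ t} dt`,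
which vanishes exactly when `ξ₀` is a nonzero integer. As `⟪e_a, e_b⟫ = μ̂(b - a)`, an orthogonal
set containing `0` has pairwise distinct integer first coordinates, and completeness forces every
integer to occur: otherwise `e_{(n,0)}` would be orthogonal to all of `E(Λ)`. Conversely, for
`Λ = {(n, β n)}` the measure-preserving parametrisation `ℝ/ℤ ≃ (0,1] → [0,1] × {0}` pulls
`e_{(n, β n)}` back to the character `e^{-2πi n t}`, so completeness of `E(Λ)` is that of the
Fourier basis of `L²(ℝ/ℤ)`.
-/

open Complex
open scoped Real

theorem Submodule.topologicalClosure_span_range_eq_top_iff {𝕜 E ι : Type*} [RCLike 𝕜]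
    [NormedAddCommGroup E] [InnerProductSpace 𝕜 E] [CompleteSpace E] (v : ι → E) :
    (span 𝕜 (range v)).topologicalClosure = ⊤ ↔ ∀ x, (∀ i, inner 𝕜 (v i) x = 0) → x = 0 := by
  rw [topologicalClosure_eq_top_iff, eq_bot_iff]
  refine forall_congr' fun x => imp_congr_left ?_
  rw [← span_singleton_le_iff_mem, ← isOrtho_iff_le, isOrtho_comm, isOrtho_span]
  simp

lemma continuous_expFn (lam : Plane) : Continuous (expFn lam) := by
  unfold expFn
  fun_prop

lemma conj_expFn_mul_expFn (a b x : Plane) :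
    (starRingEnd ℂ) (expFn a x) * expFn b x = expFn (b - a) x := by
  simp only [expFn, ← exp_conj, ← exp_add, map_mul, conj_ofReal, conj_I, inner_sub_left]
  congr 1
  push_cast
  ring

lemma inner_expLp (μ : Measure Plane) [IsFiniteMeasure μ] (a b : Plane) :
    inner ℂ (expLp μ a) (expLp μ b) = fourierTransform μ (b - a) := by
  rw [L2.inner_def]
  refine (integral_congr_ae ?_).trans
    (integral_congr_ae (.of_forall fun x => conj_expFn_mul_expFn a b x))
  filter_upwards [(expFn_memLp μ a).coeFn_toLp, (expFn_memLp μ b).coeFn_toLp] with x ha hb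
  rw [expLp, expLp, ha, hb, RCLike.inner_apply']

lemma fourierTransform_zero (μ : Measure Plane) [IsProbabilityMeasure μ] :
    fourierTransform μ 0 = 1 := by
  simp [fourierTransform]

lemma isOrthogonalSet_iff (μ : Measure Plane) [IsProbabilityMeasure μ] (Λ : Set Plane) :
    IsOrthogonalSet μ Λ ↔ Λ.Pairwise fun a b => fourierTransform μ (b - a) = 0 := by
  classical
  rw [IsOrthogonalSet, orthonormal_iff_ite]
  simp only [inner_expLp]
  constructor
  · intro h a ha b hb hab
    simpa [hab] using h ⟨a, ha⟩ ⟨b, hb⟩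
  · rintro h ⟨a, ha⟩ ⟨b, hb⟩
    split_ifs with hab
    · obtain rfl : a = b := congrArg Subtype.val hab
      simp [fourierTransform_zero]
    · exact h ha hb (by simpa using hab)

lemma isSpectrum_iff (μ : Measure Plane) [IsFiniteMeasure μ] (Λ : Set Plane) :
    IsSpectrum μ Λ ↔ IsOrthogonalSet μ Λ ∧
      ∀ f : Lp ℂ 2 μ, (∀ lam ∈ Λ, inner ℂ (expLp μ lam) f = 0) → f = 0 := by
  rw [IsSpectrum, IsOrthogonalSet, Submodule.topologicalClosure_span_range_eq_top_iff]
  exact and_congr_right' (forall_congr' fun f => imp_congr_left Subtype.forall)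

@[simp]
lemma pt_apply_zero (a b : ℝ) : pt a b 0 = a := rfl

lemma pt_eta (lam : Plane) : pt (lam 0) (lam 1) = lam := by
  ext i
  fin_cases i <;> rfl

lemma inner_pt_zero (lam : Plane) (t : ℝ) : inner ℝ lam (pt t 0) = lam 0 * t := by
  simp [pt, PiLp.inner_apply, Fin.sum_univ_two, mul_comm]

lemma expFn_pt (lam : Plane) (t : ℝ) :
    expFn lam (pt t 0) = exp (-(2 * π * lam 0 * t) * I) := by
  rw [expFn, inner_pt_zero]
  push_cast
  ring_nf

lemma measurePreserving_pt :
    MeasurePreserving (fun t : ℝ => pt t 0) (volume.restrict (Ioc 0 1)) muRB :=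
  ⟨measurable_pt0, by rw [restrict_Ioc_eq_restrict_Icc]; rfl⟩

lemma fourierTransform_muRB (ξ : Plane) :
    fourierTransform muRB ξ = ∫ t in (0 : ℝ)..1, exp (-(2 * π * ξ 0) * I * t) := by
  change ∫ x, expFn ξ x ∂muRB = _
  rw [muRB, integral_map measurable_pt0.aemeasurable (continuous_expFn ξ).aestronglyMeasurable,
    integral_Icc_eq_integral_Ioc, ← intervalIntegral.integral_of_le zero_le_one]
  congr 1 with t
  rw [expFn_pt]
  ring_nf

lemma integral_exp_mul_eq_zero_iff (c : ℂ) :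
    ∫ t in (0 : ℝ)..1, exp (c * t) = 0 ↔ c ≠ 0 ∧ exp c = 1 := by
  rcases eq_or_ne c 0 with rfl | hc
  · simp
  · rw [integral_exp_mul_complex hc]
    simp [hc, sub_eq_zero]

lemma fourierTransform_muRB_eq_zero_iff (ξ : Plane) :
    fourierTransform muRB ξ = 0 ↔ ∃ n : ℤ, n ≠ 0 ∧ ξ 0 = n := by
  have h2pi : (2 * π * I : ℂ) ≠ 0 := two_pi_I_ne_zero
  rw [fourierTransform_muRB, integral_exp_mul_eq_zero_iff, exp_eq_one_iff,
    show -(2 * π * (ξ 0 : ℂ)) * I = -(ξ 0 : ℂ) * (2 * π * I) by ring]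
  simp only [ne_eq, mul_eq_zero, h2pi, or_false, neg_eq_zero, ofReal_eq_zero, mul_left_inj' h2pi]
  constructor
  · rintro ⟨hne, n, hn⟩
    have hξ : ξ 0 = ((-n : ℤ) : ℝ) := by
      push_cast
      exact_mod_cast neg_eq_iff_eq_neg.mp hn
    exact ⟨-n, fun h => hne (by simp [hξ, h]), hξ⟩
  · rintro ⟨n, hn, hξ⟩
    exact ⟨by simpa [hξ] using hn, -n, by simp [hξ]⟩

noncomputable def circleToSegment (y : AddCircle (1 : ℝ)) : Plane :=
  pt (AddCircle.equivIoc 1 0 y) 0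

lemma measurePreserving_circleToSegment :
    MeasurePreserving circleToSegment AddCircle.haarAddCircle muRB := by
  have hvol : (volume : Measure (AddCircle (1 : ℝ))) = AddCircle.haarAddCircle := by
    simp [AddCircle.volume_eq_smul_haarAddCircle]
  have hpt := measurePreserving_pt
  rw [← zero_add (1 : ℝ)] at hpt
  exact hvol ▸ hpt.comp ((measurePreserving_subtype_coe measurableSet_Ioc).comp
    (AddCircle.measurePreserving_equivIoc 1))

lemma compMeasurePreserving_expLp_pt (n : ℤ) (b : ℝ) :
    Lp.compMeasurePreserving (E := ℂ) circleToSegment measurePreserving_circleToSegment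
      (expLp muRB (pt n b)) = fourierLp 2 (-n) := by
  refine Lp.ext ?_
  filter_upwards [Lp.coeFn_compMeasurePreserving (expLp muRB (pt n b))
      measurePreserving_circleToSegment,
    measurePreserving_circleToSegment.quasiMeasurePreserving.ae_eq_comp
      (expFn_memLp muRB (pt n b)).coeFn_toLp, coeFn_fourierLp 2 (-n)] with y h1 h2 h3
  rw [h1, h3, expLp, h2, Function.comp_apply, circleToSegment, expFn_pt, pt_apply_zero,
    ← AddCircle.coe_equivIoc (a := 0) (y := y), fourier_coe_apply, AddCircle.coe_equivIoc]
  congr 1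
  push_cast
  ring

lemma eq_zero_of_forall_inner_expLp_pt_eq_zero (β : ℤ → ℝ) (f : Lp ℂ 2 muRB)
    (hf : ∀ n : ℤ, inner ℂ (expLp muRB (pt n (β n))) f = 0) : f = 0 := by
  let T := Lp.compMeasurePreservingₗᵢ ℂ (E := ℂ) (p := 2) circleToSegment
    measurePreserving_circleToSegment
  have hTf : T f = 0 := by
    refine (Submodule.topologicalClosure_span_range_eq_top_iff _).1
      (fourierBasis (T := 1)).dense_span _ fun n => ?_
    rw [coe_fourierBasis, ← neg_neg n, ← compMeasurePreserving_expLp_pt (-n) (β (-n))]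
    exact (T.inner_map_map _ _).trans (hf _)
  exact T.injective (hTf.trans T.map_zero.symm)

lemma isOrthogonalSet_range_pt (β : ℤ → ℝ) :
    IsOrthogonalSet muRB (range fun n : ℤ => pt n (β n)) := by
  rw [isOrthogonalSet_iff]
  rintro _ ⟨m, rfl⟩ _ ⟨n, rfl⟩ hmn
  rw [fourierTransform_muRB_eq_zero_iff]
  exact ⟨n - m, sub_ne_zero.2 fun h => hmn (by rw [h]), by simp⟩

lemma exists_int_ne_zero_sub_eq_of_isOrthogonalSet {Λ : Set Plane} (h : IsOrthogonalSet muRB Λ)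
    {a b : Plane} (ha : a ∈ Λ) (hb : b ∈ Λ) (hab : a ≠ b) : ∃ n : ℤ, n ≠ 0 ∧ b 0 - a 0 = n := by
  simpa using (fourierTransform_muRB_eq_zero_iff _).1 ((isOrthogonalSet_iff _ _).1 h ha hb hab)

lemma bijOn_apply_zero_of_isSpectrum {Λ : Set Plane} (h0 : (0 : Plane) ∈ Λ)
    (h : IsSpectrum muRB Λ) : BijOn (fun lam : Plane => lam 0) Λ (range ((↑) : ℤ → ℝ)) := by
  obtain ⟨horth, hcomplete⟩ := (isSpectrum_iff _ _).1 h
  have hmaps : MapsTo (fun lam : Plane => lam 0) Λ (range ((↑) : ℤ → ℝ)) := fun lam hlam => by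
    rcases eq_or_ne 0 lam with rfl | hne
    · exact ⟨0, by simp⟩
    · obtain ⟨n, -, hn⟩ := exists_int_ne_zero_sub_eq_of_isOrthogonalSet horth h0 hlam hne
      exact ⟨n, by simpa using hn.symm⟩
  refine ⟨hmaps, fun a ha b hb hab => ?_, ?_⟩
  · by_contra hne
    obtain ⟨n, hn, hba⟩ := exists_int_ne_zero_sub_eq_of_isOrthogonalSet horth ha hb hne
    rw [show a 0 = b 0 from hab, sub_self] at hba
    exact hn (Int.cast_eq_zero.1 hba.symm)
  · rintro _ ⟨n, rfl⟩
    by_contra hn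
    have hzero : expLp muRB (pt n 0) = 0 := hcomplete _ fun lam hlam => by
      obtain ⟨m, hm⟩ := hmaps hlam
      rw [inner_expLp, fourierTransform_muRB_eq_zero_iff]
      refine ⟨n - m, sub_ne_zero.2 ?_, by simp [← hm]⟩
      rintro rfl
      exact hn ⟨lam, hlam, hm.symm⟩
    have hone := inner_expLp muRB (pt n 0) (pt n 0)
    rw [hzero, inner_zero_left, sub_self, fourierTransform_zero] at hone
    exact zero_ne_one hone

lemma exists_eq_range_pt_of_bijOn {Λ : Set Plane} (h0 : (0 : Plane) ∈ Λ)
    (h : BijOn (fun lam : Plane => lam 0) Λ (range ((↑) : ℤ → ℝ))) :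
    ∃ β : ℤ → ℝ, β 0 = 0 ∧ Λ = range fun n : ℤ => pt n (β n) := by
  choose lam hlamΛ hlam0 using fun n : ℤ => h.surjOn (mem_range_self n)
  have hpt : ∀ n : ℤ, pt n (lam n 1) = lam n := fun n => hlam0 n ▸ pt_eta (lam n)
  refine ⟨fun n => lam n 1, ?_, ?_⟩
  · have : lam 0 = 0 := h.injOn (hlamΛ 0) h0 (by simpa using hlam0 0)
    simp [this]
  · ext x
    constructor
    · intro hx
      obtain ⟨n, hn⟩ := h.mapsTo hx
      exact ⟨n, (hpt n).trans (h.injOn (hlamΛ n) hx ((hlam0 n).trans hn))⟩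
    · rintro ⟨n, rfl⟩
      simpa only [hpt] using hlamΛ n

/-- A set `Λ ∋ 0` is a spectrum of `μ_{R,B}` iff
`Λ = {(n, β(n)) : n ∈ ℤ}` for some `β : ℤ → ℝ` with `β 0 = 0`. -/
theorem isSpectrum_muRB_iff (Λ : Set Plane) (h0 : (0 : Plane) ∈ Λ) :
    IsSpectrum muRB Λ ↔
      ∃ β : ℤ → ℝ, β 0 = 0 ∧ Λ = Set.range fun n : ℤ => pt (n : ℝ) (β n) := by
  constructor
  · exact fun h => exists_eq_range_pt_of_bijOn h0 (bijOn_apply_zero_of_isSpectrum h0 h)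
  · rintro ⟨β, -, rfl⟩
    exact (isSpectrum_iff _ _).2 ⟨isOrthogonalSet_range_pt β,
      fun f hf => eq_zero_of_forall_inner_expLp_pt_eq_zero β f fun n => hf _ ⟨n, rfl⟩⟩
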